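/- For parameters α ∈ [0,1], β ∈ (0,1], ν > α−1 (so that in particular α + β ≤ 2), the generalized factorial moments satisfy Carleman's condition for the Stieltjes moment problem: the series ∑_{n=1}^∞ ([n]_{α,β,ν}!)^{−1/(2n)} diverges to +∞. -/
import Mathlib

/-- The generalized factorial `[n]_{α,β,ν}!`. -/
noncomputable def genFact (α β ν : ℝ) (n : ℕ) : ℝ :=
  (∏ i ∈ Finset.Icc 1 n, Real.Gamma (β * i + 1) / Real.Gamma (β * i + 1 - α)) *
    (Real.Gamma (β * n + 1 - α + ν) / Real.Gamma (1 - α + ν))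

/-- Interpolation bound from log-convexity of `Γ`. -/
lemma gamma_add_le_aux {x s : ℝ} (hx : 0 < x) (hs0 : 0 ≤ s) (hs1 : s ≤ 1) :
    Real.Gamma (x + s) ≤ Real.Gamma x * (x + 1) := by
  have hΓx := Real.Gamma_pos_of_pos hx
  have hΓx1 := Real.Gamma_pos_of_pos (by linarith : (0:ℝ) < x + 1)
  have hc := Real.convexOn_log_Gamma.2 (Set.mem_Ioi.2 hx)
    (Set.mem_Ioi.2 (by linarith : (0:ℝ) < x + 1)) (by linarith : (0:ℝ) ≤ 1 - s) hs0
    (by ring : (1 - s) + s = 1)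
  simp only [smul_eq_mul, Function.comp_apply] at hc
  have hcomb : (1 - s) * x + s * (x + 1) = x + s := by ring
  rw [hcomb] at hc
  have hlog1 : Real.log (Real.Gamma (x + 1)) = Real.log x + Real.log (Real.Gamma x) := by
    rw [Real.Gamma_add_one hx.ne', Real.log_mul hx.ne' hΓx.ne']
  have hc2 : Real.log (Real.Gamma (x + s)) ≤ Real.log (Real.Gamma x) + s * Real.log x := by
    rw [hlog1] at hc; nlinarith [hc]
  have hΓxs := Real.Gamma_pos_of_pos (by linarith : (0:ℝ) < x + s)
  have h1 : Real.Gamma (x + s) ≤ Real.Gamma x * x ^ s := by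
    have := Real.exp_le_exp.2 hc2
    rwa [Real.exp_log hΓxs, Real.exp_add, Real.exp_log hΓx,
      show s * Real.log x = Real.log x * s by ring, ← Real.rpow_def_of_pos hx] at this
  have h2 : x ^ s ≤ x + 1 := by
    rcases le_total x 1 with h | h
    · calc x ^ s ≤ 1 := Real.rpow_le_one hx.le h hs0
        _ ≤ x + 1 := by linarith
    · calc x ^ s ≤ x ^ (1:ℝ) := Real.rpow_le_rpow_of_exponent_le h hs1
        _ = x := Real.rpow_one x
        _ ≤ x + 1 := by linarith
  calc Real.Gamma (x + s) ≤ Real.Gamma x * x ^ s := h1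
    _ ≤ Real.Gamma x * (x + 1) := by nlinarith [hΓx]

lemma gamma_shift_le {β t : ℝ} (hβ0 : 0 < β) (hβ1 : β ≤ 1) (ht : 0 < t) (n : ℕ) :
    Real.Gamma (β * n + t) ≤ Real.Gamma t * ((n : ℝ) + t + 1) ^ n := by
  induction n with
  | zero => simp
  | succ n ih =>
    have hx : (0:ℝ) < β * n + t := by positivity
    have hstep : Real.Gamma (β * (n + 1 : ℕ) + t) ≤
        Real.Gamma (β * n + t) * (β * n + t + 1) := by
      have := gamma_add_le_aux hx hβ0.le hβ1
      convert this using 2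
      push_cast; ring
    have hΓt := Real.Gamma_pos_of_pos ht
    have hb1 : β * n + t + 1 ≤ (↑(n + 1) : ℝ) + t + 1 := by
      push_cast
      nlinarith [Nat.cast_nonneg (α := ℝ) n]
    have hb2 : ((n:ℝ) + t + 1) ^ n ≤ ((↑(n + 1) : ℝ) + t + 1) ^ n := by
      apply pow_le_pow_left₀ (by positivity)
      push_cast; linarith
    calc Real.Gamma (β * (n + 1 : ℕ) + t) ≤ Real.Gamma (β * n + t) * (β * n + t + 1) := hstep
      _ ≤ (Real.Gamma t * ((n : ℝ) + t + 1) ^ n) * (β * n + t + 1) := by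
          apply mul_le_mul_of_nonneg_right ih (by positivity)
      _ ≤ (Real.Gamma t * ((↑(n + 1) : ℝ) + t + 1) ^ n) * ((↑(n + 1) : ℝ) + t + 1) := by
          apply mul_le_mul
          · exact mul_le_mul_of_nonneg_left hb2 hΓt.le
          · exact hb1
          · positivity
          · positivity
      _ = Real.Gamma t * ((↑(n + 1) : ℝ) + t + 1) ^ (n + 1) := by ring

lemma genFact_pos (α β ν : ℝ) (hα0 : 0 ≤ α) (hα1 : α ≤ 1)
    (hβ0 : 0 < β) (hν : ν > α - 1) (n : ℕ) : 0 < genFact α β ν n := by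
  unfold genFact
  have h1 : 0 < Real.Gamma (β * n + 1 - α + ν) :=
    Real.Gamma_pos_of_pos (by nlinarith [Nat.cast_nonneg (α := ℝ) n])
  have h2 : 0 < Real.Gamma (1 - α + ν) := Real.Gamma_pos_of_pos (by linarith)
  have h3 : ∀ i ∈ Finset.Icc 1 n,
      0 < Real.Gamma (β * i + 1) / Real.Gamma (β * i + 1 - α) := by
    intro i hi
    have hi1 : (1:ℝ) ≤ (i:ℝ) := by
      exact_mod_cast (Finset.mem_Icc.1 hi).1
    have ha : 0 < Real.Gamma (β * i + 1) :=
      Real.Gamma_pos_of_pos (by nlinarith)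
    have hb : 0 < Real.Gamma (β * i + 1 - α) :=
      Real.Gamma_pos_of_pos (by nlinarith)
    positivity
  exact mul_pos (Finset.prod_pos h3) (div_pos h1 h2)

lemma genFact_le (α β ν : ℝ) (hα0 : 0 ≤ α) (hα1 : α ≤ 1)
    (hβ0 : 0 < β) (hβ1 : β ≤ 1) (hν : ν > α - 1) {n : ℕ} (hn : 1 ≤ n) :
    genFact α β ν n ≤ ((3 * (3 - α + ν)) * n) ^ (2 * n) := by
  set t : ℝ := 1 - α + ν with ht_def
  have ht : 0 < t := by simp only [ht_def]; linarith
  have hΓt := Real.Gamma_pos_of_pos ht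
  have hn1 : (1:ℝ) ≤ (n:ℝ) := by exact_mod_cast hn
  -- bound the product
  have hP : (∏ i ∈ Finset.Icc 1 n, Real.Gamma (β * i + 1) / Real.Gamma (β * i + 1 - α))
      ≤ (3 * n) ^ n := by
    have hcard : (Finset.Icc 1 n).card = n := by simp
    calc (∏ i ∈ Finset.Icc 1 n, Real.Gamma (β * i + 1) / Real.Gamma (β * i + 1 - α))
        ≤ ∏ _i ∈ Finset.Icc 1 n, (3 * (n:ℝ)) := by
          apply Finset.prod_le_prod
          · intro i hi
            have hi1 : (1:ℝ) ≤ (i:ℝ) := by exact_mod_cast (Finset.mem_Icc.1 hi).1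
            have ha : 0 < Real.Gamma (β * i + 1) := Real.Gamma_pos_of_pos (by nlinarith)
            have hb : 0 < Real.Gamma (β * i + 1 - α) := Real.Gamma_pos_of_pos (by nlinarith)
            positivity
          · intro i hi
            obtain ⟨hi1, hi2⟩ := Finset.mem_Icc.1 hi
            have hi1' : (1:ℝ) ≤ (i:ℝ) := by exact_mod_cast hi1
            have hi2' : (i:ℝ) ≤ (n:ℝ) := by exact_mod_cast hi2
            have hy : (0:ℝ) < β * i + 1 - α := by nlinarith
            have hb := Real.Gamma_pos_of_pos hy
            have hkey : Real.Gamma (β * i + 1) ≤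
                Real.Gamma (β * i + 1 - α) * (β * i + 1 - α + 1) := by
              have := gamma_add_le_aux hy hα0 hα1
              convert this using 2
              ring
            rw [div_le_iff₀ hb]
            calc Real.Gamma (β * i + 1) ≤ Real.Gamma (β * i + 1 - α) * (β * i + 1 - α + 1) :=
                hkey
              _ ≤ Real.Gamma (β * i + 1 - α) * (3 * n) := by
                  apply mul_le_mul_of_nonneg_left _ hb.le
                  nlinarith
              _ = 3 * n * Real.Gamma (β * i + 1 - α) := by ring
        _ = (3 * (n:ℝ)) ^ n := by rw [Finset.prod_const, hcard]
  have hQ : Real.Gamma (β * n + t) / Real.Gamma t ≤ ((n:ℝ) + t + 1) ^ n := by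
    rw [div_le_iff₀ hΓt]
    calc Real.Gamma (β * n + t) ≤ Real.Gamma t * ((n:ℝ) + t + 1) ^ n :=
        gamma_shift_le hβ0 hβ1 ht n
      _ = ((n:ℝ) + t + 1) ^ n * Real.Gamma t := by ring
  have hQ' : ((n:ℝ) + t + 1) ^ n ≤ ((t + 2) * n) ^ n := by
    apply pow_le_pow_left₀ (by positivity)
    nlinarith
  have hgf : genFact α β ν n =
      (∏ i ∈ Finset.Icc 1 n, Real.Gamma (β * i + 1) / Real.Gamma (β * i + 1 - α)) *
        (Real.Gamma (β * n + t) / Real.Gamma t) := by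
    unfold genFact
    congr 2 <;> · simp only [ht_def]; ring
  have hPpos : (0:ℝ) ≤ ∏ i ∈ Finset.Icc 1 n,
      Real.Gamma (β * i + 1) / Real.Gamma (β * i + 1 - α) := by
    apply Finset.prod_nonneg
    intro i hi
    have hi1 : (1:ℝ) ≤ (i:ℝ) := by exact_mod_cast (Finset.mem_Icc.1 hi).1
    have ha : 0 < Real.Gamma (β * i + 1) := Real.Gamma_pos_of_pos (by nlinarith)
    have hb : 0 < Real.Gamma (β * i + 1 - α) := Real.Gamma_pos_of_pos (by nlinarith)
    positivity
  have hQpos : (0:ℝ) ≤ Real.Gamma (β * n + t) / Real.Gamma t := by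
    have := Real.Gamma_pos_of_pos (show (0:ℝ) < β * n + t by positivity)
    positivity
  have hmain : genFact α β ν n ≤ (3 * n) ^ n * ((t + 2) * n) ^ n := by
    rw [hgf]
    apply mul_le_mul hP (le_trans hQ hQ') hQpos (by positivity)
  have hD : (3 * (3 - α + ν)) = 3 * (t + 2) := by simp only [ht_def]; ring
  rw [hD]
  calc genFact α β ν n ≤ (3 * n) ^ n * ((t + 2) * n) ^ n := hmain
    _ = ((3 * (t + 2)) * ((n:ℝ) * n)) ^ n := by rw [← mul_pow]; ring_nf
    _ ≤ ((3 * (t + 2) * n) * (3 * (t + 2) * n)) ^ n := by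
        apply pow_le_pow_left₀ (by positivity)
        nlinarith
    _ = ((3 * (t + 2)) * n) ^ (2 * n) := by rw [two_mul, pow_add, ← mul_pow]

theorem genFact_carleman_condition (α β ν : ℝ) (hα0 : 0 ≤ α) (hα1 : α ≤ 1)
    (hβ0 : 0 < β) (hβ1 : β ≤ 1) (hν : ν > α - 1) :
    Filter.Tendsto
      (fun N : ℕ => ∑ n ∈ Finset.Icc 1 N, (genFact α β ν n) ^ (-(1 : ℝ) / (2 * n)))
      Filter.atTop Filter.atTop := by
  set D : ℝ := 3 * (3 - α + ν) with hD_def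
  have hD : 0 < D := by simp only [hD_def]; nlinarith
  have hbound : ∀ n : ℕ, 1 ≤ n →
      (1 / D) * (1 / n) ≤ (genFact α β ν n) ^ (-(1 : ℝ) / (2 * n)) := by
    intro n hn
    have hn1 : (1:ℝ) ≤ (n:ℝ) := by exact_mod_cast hn
    have hnpos : (0:ℝ) < n := by linarith
    have hgpos := genFact_pos α β ν hα0 hα1 hβ0 hν n
    have hle := genFact_le α β ν hα0 hα1 hβ0 hβ1 hν hn
    have hexp : (-(1:ℝ) / (2 * n)) ≤ 0 := by
      apply div_nonpos_of_nonpos_of_nonneg <;> [linarith; positivity]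
    have h1 : ((D * n) ^ (2 * n) : ℝ) ^ (-(1:ℝ) / (2 * n)) ≤
        (genFact α β ν n) ^ (-(1 : ℝ) / (2 * n)) :=
      Real.rpow_le_rpow_of_nonpos hgpos hle hexp
    have h2 : ((D * n) ^ (2 * n) : ℝ) ^ (-(1:ℝ) / (2 * n)) = 1 / (D * n) := by
      have hDn : (0:ℝ) < D * n := by positivity
      rw [← Real.rpow_natCast (D * n) (2 * n), ← Real.rpow_mul hDn.le]
      have : ((2 * n : ℕ) : ℝ) * (-(1:ℝ) / (2 * n)) = -1 := by
        push_cast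
        field_simp
      rw [this, Real.rpow_neg_one, one_div, inv_eq_one_div]
    calc (1 / D) * (1 / (n:ℝ)) = 1 / (D * n) := by rw [div_mul_div_comm, one_mul]
      _ = ((D * n) ^ (2 * n) : ℝ) ^ (-(1:ℝ) / (2 * n)) := h2.symm
      _ ≤ (genFact α β ν n) ^ (-(1 : ℝ) / (2 * n)) := h1
  have hharm : Filter.Tendsto
      (fun N : ℕ => (1 / D) * ∑ n ∈ Finset.Icc 1 N, (1 / (n:ℝ)))
      Filter.atTop Filter.atTop := by
    apply Filter.Tendsto.const_mul_atTop (by positivity : (0:ℝ) < 1 / D)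
    have heq : ∀ N : ℕ, ∑ n ∈ Finset.Icc 1 N, (1 / (n:ℝ)) =
        ∑ i ∈ Finset.range N, (1 / ((i:ℝ) + 1)) := by
      intro N
      rw [← Finset.Ico_add_one_right_eq_Icc, Finset.sum_Ico_eq_sum_range]
      apply Finset.sum_congr (by norm_num)
      intro i _
      congr 1
      push_cast
      ring
    simp only [heq]
    exact Real.tendsto_sum_range_one_div_nat_succ_atTop
  apply Filter.tendsto_atTop_mono _ hharm
  intro N
  rw [Finset.mul_sum]
  apply Finset.sum_le_sum
  intro n hn
  exact hbound n (Finset.mem_Icc.1 hn).1
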